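/- Let λ_1, …, λ_r be distinct complex numbers and L_j(z) = ∏_{i≠j} (z - λ_i)/(λ_j - λ_i) the Lagrange interpolation polynomials. Let Λ be a linear functional on ℂ[z,w] with Λ(w^i z^j) = γ(i,j), conjugate-symmetric, positive semidefinite, and such that ∏_{i=1}^r (z - λ_i) is a characteristic polynomial (Λ annihilates w^m z^n ∏(z - λ_i) and its conjugate). Then γ(m,n) = Σ_{i=1}^r c_i · conj(λ_i)^m · λ_i^n for all m, n ≥ 0, where c_i = Λ(L_i · conj(L_i)) ≥ 0. Hence the measure μ = Σ c_i δ_{λ_i} represents γ. -/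

import Mathlib

open MvPolynomial Complex

/-- The involution on `ℂ[z,w]` conjugating coefficients and swapping the
two variables (`0 = w = z̄`, `1 = z`). -/
noncomputable def polyBar (p : MvPolynomial (Fin 2) ℂ) : MvPolynomial (Fin 2) ℂ :=
  MvPolynomial.rename (Equiv.swap (0 : Fin 2) 1)
    (MvPolynomial.map (starRingEnd ℂ) p)

/-- The Lagrange basis polynomial `Lⱼ(z) = ∏_{i≠j} (z-λᵢ)/(λⱼ-λᵢ)`, viewed as
an element of `ℂ[z,w]` in the variable `z`. -/
noncomputable def lagrangeMv {r : ℕ} (lam : Fin r → ℂ) (j : Fin r) :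
    MvPolynomial (Fin 2) ℂ :=
  Polynomial.aeval (X (1 : Fin 2)) (Lagrange.basis Finset.univ lam j)

/-!
Because `Λ` kills the ideal generated by the nodal polynomial `χ(z) = ∏ (z - λᵢ)` and by its
conjugate, `Λ(P(z) Q̄(w))` depends only on the values of `P` and `Q` at the nodes. Replacing
`zⁿ` and `wᵐ` by their Lagrange interpolants expands `γ(m,n)` as
`∑ᵢⱼ λᵢⁿ λ̄ⱼᵐ Λ(Lᵢ L̄ⱼ)`. The off-diagonal terms vanish by Cauchy–Schwarz for the positive
semidefinite form `(p, q) ↦ Λ(q p̄)`: for `i ≠ j` the polynomial `b = L̄ᵢ Lⱼ` has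
`b b̄ = (LᵢLⱼ)(LᵢLⱼ)‾` with `LᵢLⱼ` vanishing at every node, so `b` is null and hence
orthogonal to `1`, i.e. `Λ(Lᵢ L̄ⱼ) = 0`.
-/

open Finset Lagrange

section polyBar

variable (p q : MvPolynomial (Fin 2) ℂ)

@[simp] lemma polyBar_add : polyBar (p + q) = polyBar p + polyBar q := by simp [polyBar]

@[simp] lemma polyBar_sub : polyBar (p - q) = polyBar p - polyBar q := by simp [polyBar]

@[simp] lemma polyBar_mul : polyBar (p * q) = polyBar p * polyBar q := by simp [polyBar]

@[simp] lemma polyBar_pow (n : ℕ) : polyBar (p ^ n) = polyBar p ^ n := by simp [polyBar]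

@[simp] lemma polyBar_smul (c : ℂ) : polyBar (c • p) = starRingEnd ℂ c • polyBar p := by
  simp [polyBar, smul_eq_C_mul]

@[simp] lemma polyBar_sum {ι : Type*} (s : Finset ι) (f : ι → MvPolynomial (Fin 2) ℂ) :
    polyBar (∑ i ∈ s, f i) = ∑ i ∈ s, polyBar (f i) := by
  simp [polyBar]

@[simp] lemma polyBar_X_one : polyBar (X 1) = X 0 := by simp [polyBar]

@[simp] lemma polyBar_polyBar : polyBar (polyBar p) = p := by
  have hswap : ⇑(Equiv.swap (0 : Fin 2) 1) ∘ ⇑(Equiv.swap 0 1) = id :=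
    funext fun i => Equiv.swap_apply_self _ _ i
  simp [polyBar, map_rename, rename_rename, hswap, MvPolynomial.map_map, MvPolynomial.map_id]

end polyBar

lemma apply_mul_eq_zero_of_forall_monomial (Λ : MvPolynomial (Fin 2) ℂ →ₗ[ℂ] ℂ)
    {q : MvPolynomial (Fin 2) ℂ} (hq : ∀ m n : ℕ, Λ (X 0 ^ m * X 1 ^ n * q) = 0)
    (p : MvPolynomial (Fin 2) ℂ) : Λ (p * q) = 0 := by
  suffices Λ ∘ₗ LinearMap.mulRight ℂ q = 0 from LinearMap.congr_fun this p
  refine linearMap_ext fun s => LinearMap.ext_ring ?_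
  simpa [monomial_eq, Finsupp.prod_pow, Fin.prod_univ_two] using hq (s 0) (s 1)

lemma nodal_dvd_of_eval_eq_zero {K ι : Type*} [Field K] [Fintype ι] {v : ι → K}
    (hv : Function.Injective v) {P : Polynomial K} (hP : ∀ i, P.eval (v i) = 0) :
    nodal univ v ∣ P := by
  rw [nodal_eq]
  exact Finset.prod_dvd_of_coprime
    (fun i _ j _ hij => Polynomial.pairwise_coprime_X_sub_C hv hij)
    (fun i _ => Polynomial.dvd_iff_isRoot.mpr (hP i))

section Reduction

variable {ι : Type*} [Fintype ι] {v : ι → ℂ} {Λ : MvPolynomial (Fin 2) ℂ →ₗ[ℂ] ℂ}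

lemma apply_aeval_mul_eq_of_eval_eq (hv : Function.Injective v)
    (hz : ∀ p, Λ (p * Polynomial.aeval (X 1) (nodal univ v)) = 0)
    {P Q : Polynomial ℂ} (hPQ : ∀ i, P.eval (v i) = Q.eval (v i)) (u : MvPolynomial (Fin 2) ℂ) :
    Λ (Polynomial.aeval (X 1) P * u) = Λ (Polynomial.aeval (X 1) Q * u) := by
  obtain ⟨s, hs⟩ := nodal_dvd_of_eval_eq_zero hv (P := P - Q) (by simp [hPQ])
  have : Polynomial.aeval (X 1) P * u - Polynomial.aeval (X 1) Q * u =
      Polynomial.aeval (X 1) s * u * Polynomial.aeval (X (1 : Fin 2)) (nodal univ v) := by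
    rw [← sub_mul, ← map_sub, hs, map_mul]; ring
  rw [← sub_eq_zero, ← map_sub, this]
  exact hz _

lemma apply_mul_polyBar_aeval_eq_of_eval_eq (hv : Function.Injective v)
    (hw : ∀ p, Λ (p * polyBar (Polynomial.aeval (X 1) (nodal univ v))) = 0)
    {P Q : Polynomial ℂ} (hPQ : ∀ i, P.eval (v i) = Q.eval (v i)) (u : MvPolynomial (Fin 2) ℂ) :
    Λ (u * polyBar (Polynomial.aeval (X 1) P)) = Λ (u * polyBar (Polynomial.aeval (X 1) Q)) := by
  obtain ⟨s, hs⟩ := nodal_dvd_of_eval_eq_zero hv (P := P - Q) (by simp [hPQ])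
  have : u * polyBar (Polynomial.aeval (X 1) P) - u * polyBar (Polynomial.aeval (X 1) Q) =
      u * polyBar (Polynomial.aeval (X 1) s) *
        polyBar (Polynomial.aeval (X (1 : Fin 2)) (nodal univ v)) := by
    rw [← mul_sub, ← polyBar_sub, ← map_sub, hs, map_mul, polyBar_mul]; ring
  rw [← sub_eq_zero, ← map_sub, this]
  exact hw _

end Reduction

section SemiInner

variable {Λ : MvPolynomial (Fin 2) ℂ →ₗ[ℂ] ℂ}

@[reducible]
noncomputable def rieszPreInnerCore (hsym : ∀ p, Λ (polyBar p) = starRingEnd ℂ (Λ p))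
    (hpos : ∀ p, 0 ≤ (Λ (p * polyBar p)).re) :
    PreInnerProductSpace.Core ℂ (MvPolynomial (Fin 2) ℂ) where
  inner p q := Λ (q * polyBar p)
  conj_inner_symm p q := by
    rw [← hsym, polyBar_mul, polyBar_polyBar, mul_comm]
  re_inner_nonneg p := hpos p
  add_left p q u := by simp only [polyBar_add, mul_add, map_add]
  smul_left p q c := by simp only [polyBar_smul, mul_smul_comm, map_smul, smul_eq_mul]

lemma apply_mul_polyBar_eq_zero_of_null (hsym : ∀ p, Λ (polyBar p) = starRingEnd ℂ (Λ p))
    (hpos : ∀ p, 0 ≤ (Λ (p * polyBar p)).re) {b : MvPolynomial (Fin 2) ℂ}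
    (hb : Λ (b * polyBar b) = 0) (a : MvPolynomial (Fin 2) ℂ) : Λ (a * polyBar b) = 0 := by
  let _ := rieszPreInnerCore hsym hpos
  have hcs := InnerProductSpace.Core.inner_mul_inner_self_le (𝕜 := ℂ) b a
  rw [InnerProductSpace.Core.norm_inner_symm a b] at hcs
  change ‖Λ (a * polyBar b)‖ * ‖Λ (a * polyBar b)‖ ≤ (Λ (b * polyBar b)).re * _ at hcs
  rw [hb, Complex.zero_re, zero_mul] at hcs
  exact norm_eq_zero.mp (mul_self_eq_zero.mp (le_antisymm hcs (by positivity)))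

end SemiInner

lemma apply_aeval_mul_polyBar_aeval_eq_zero {ι : Type*} [Fintype ι] {v : ι → ℂ}
    (hv : Function.Injective v) {Λ : MvPolynomial (Fin 2) ℂ →ₗ[ℂ] ℂ}
    (hz : ∀ p, Λ (p * Polynomial.aeval (X 1) (nodal univ v)) = 0)
    (hsym : ∀ p, Λ (polyBar p) = starRingEnd ℂ (Λ p)) (hpos : ∀ p, 0 ≤ (Λ (p * polyBar p)).re)
    {A B : Polynomial ℂ} (hAB : ∀ i, A.eval (v i) * B.eval (v i) = 0) :
    Λ (Polynomial.aeval (X 1) A * polyBar (Polynomial.aeval (X 1) B)) = 0 := by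
  set b := polyBar (Polynomial.aeval (X 1) A) * Polynomial.aeval (X 1) B
  have hb : Λ (b * polyBar b) = 0 := by
    have h := apply_aeval_mul_eq_of_eval_eq hv hz (P := A * B) (Q := 0)
      (by simpa using hAB) (polyBar (Polynomial.aeval (X 1) (A * B)))
    rw [map_zero, zero_mul, map_zero] at h
    rw [← h, Polynomial.aeval_mul]
    simp only [b, polyBar_mul, polyBar_polyBar]
    ring_nf
  simpa [b, mul_comm] using apply_mul_polyBar_eq_zero_of_null hsym hpos hb 1

lemma apply_interpolate_mul_polyBar_interpolate {ι : Type*} [Fintype ι] [DecidableEq ι]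
    {v : ι → ℂ} (hv : Function.Injective v) {Λ : MvPolynomial (Fin 2) ℂ →ₗ[ℂ] ℂ}
    (hz : ∀ p, Λ (p * Polynomial.aeval (X 1) (nodal univ v)) = 0)
    (hsym : ∀ p, Λ (polyBar p) = starRingEnd ℂ (Λ p)) (hpos : ∀ p, 0 ≤ (Λ (p * polyBar p)).re)
    (f g : ι → ℂ) :
    Λ (Polynomial.aeval (X 1) (interpolate univ v f) *
        polyBar (Polynomial.aeval (X 1) (interpolate univ v g))) =
      ∑ i, f i * starRingEnd ℂ (g i) *
        Λ (Polynomial.aeval (X 1) (Lagrange.basis univ v i) *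
          polyBar (Polynomial.aeval (X 1) (Lagrange.basis univ v i))) := by
  have horth : ∀ i j, i ≠ j → Λ (Polynomial.aeval (X 1) (Lagrange.basis univ v i) *
      polyBar (Polynomial.aeval (X 1) (Lagrange.basis univ v j))) = 0 := by
    refine fun i j hij => apply_aeval_mul_polyBar_aeval_eq_zero hv hz hsym hpos fun k => ?_
    by_cases hki : k = i
    · rw [hki, eval_basis_of_ne (Ne.symm hij) (mem_univ i), mul_zero]
    · rw [eval_basis_of_ne (Ne.symm hki) (mem_univ k), zero_mul]
  simp only [interpolate_apply, ← Polynomial.smul_eq_C_mul, map_sum, map_smul, polyBar_sum,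
    polyBar_smul, sum_mul_sum, smul_mul_smul_comm, map_smul, smul_eq_mul]
  refine sum_congr rfl fun i _ => ?_
  rw [Fintype.sum_eq_single i fun j hji => by rw [horth i j hji.symm, mul_zero]]

/-- If `Λ` is a conjugate-symmetric positive semidefinite Riesz functional for
`γ` which annihilates `w^m z^n ∏(z - λᵢ)` and its conjugate, then
`γ(m,n) = ∑ cᵢ λ̄ᵢ^m λᵢ^n` with `cᵢ = Λ(Lᵢ·L̄ᵢ) ≥ 0`; i.e. the finitely atomic
measure `∑ cᵢ δ_{λᵢ}` represents `γ`. -/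
theorem riesz_functional_atomic_representation
    (γ : ℕ → ℕ → ℂ) (r : ℕ) (lam : Fin r → ℂ) (hinj : Function.Injective lam)
    (Λ : MvPolynomial (Fin 2) ℂ →ₗ[ℂ] ℂ)
    (hmono : ∀ i j : ℕ, Λ (X 0 ^ i * X 1 ^ j) = γ i j)
    (hsym : ∀ p, Λ (polyBar p) = (starRingEnd ℂ) (Λ p))
    (hpos : ∀ p, 0 ≤ (Λ (p * polyBar p)).re ∧ (Λ (p * polyBar p)).im = 0)
    (hchar : ∀ m n : ℕ,
      Λ (X 0 ^ m * X 1 ^ n * ∏ i, (X 1 - C (lam i))) = 0 ∧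
      Λ (X 0 ^ m * X 1 ^ n * polyBar (∏ i, (X 1 - C (lam i)))) = 0) :
    (∀ i, 0 ≤ (Λ (lagrangeMv lam i * polyBar (lagrangeMv lam i))).re ∧
      (Λ (lagrangeMv lam i * polyBar (lagrangeMv lam i))).im = 0) ∧
    ∀ m n : ℕ, γ m n = ∑ i,
      Λ (lagrangeMv lam i * polyBar (lagrangeMv lam i))
        * (starRingEnd ℂ) (lam i) ^ m * lam i ^ n := by
  refine ⟨fun i => hpos _, fun m n => ?_⟩
  have hnodal : Polynomial.aeval (X 1) (nodal univ lam) = ∏ i, (X (1 : Fin 2) - C (lam i)) := by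
    simp [nodal_eq]
  have hz : ∀ p, Λ (p * Polynomial.aeval (X 1) (nodal univ lam)) = 0 :=
    apply_mul_eq_zero_of_forall_monomial Λ fun m n => by simpa [hnodal] using (hchar m n).1
  have hw : ∀ p, Λ (p * polyBar (Polynomial.aeval (X 1) (nodal univ lam))) = 0 :=
    apply_mul_eq_zero_of_forall_monomial Λ fun m n => by simpa [hnodal] using (hchar m n).2
  have hpow (k : ℕ) (i : Fin r) : (Polynomial.X ^ k : Polynomial ℂ).eval (lam i) =
      (interpolate univ lam fun j => lam j ^ k).eval (lam i) := by
    rw [eval_interpolate_at_node _ hinj.injOn (mem_univ i), Polynomial.eval_X_pow]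
  have hγ : γ m n = Λ (Polynomial.aeval (X 1) (Polynomial.X ^ n : Polynomial ℂ) *
      polyBar (Polynomial.aeval (X 1) (Polynomial.X ^ m : Polynomial ℂ))) := by
    simp [← hmono m n, mul_comm]
  rw [hγ, apply_aeval_mul_eq_of_eval_eq hinj hz (hpow n),
    apply_mul_polyBar_aeval_eq_of_eval_eq hinj hw (hpow m),
    apply_interpolate_mul_polyBar_interpolate hinj hz hsym (fun p => (hpos p).1)]
  refine sum_congr rfl fun i _ => ?_
  rw [map_pow, lagrangeMv]
  ring
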